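/- Let (σ,τ,h) be a semifull algebra contraction of (A,d_A) onto (B,d_B). Then for every n ≥ 2 and all x_1,…,x_n ∈ B, the cumulants of τ satisfy κ(τ)_n(x_1,…,x_n) = Σ h( K(d_A)_k( κ(τ)_{|I_1|}((x_i)_{i∈I_1}), …, κ(τ)_{|I_k|}((x_i)_{i∈I_k}) ) ), the sum running over all partitions {I_1,…,I_k} of {1,…,n} into k ≥ 2 nonempty blocks. (Hence κ(τ) is the L∞ morphism obtained by homotopy transfer from the L∞ structure given by the Koszul brackets of d_A.) -/

import Mathlib

open Finset

/-- The `n`-th Koszul bracket of an operator `D` on a commutative ring. -/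
noncomputable def koszul {R : Type*} [CommRing R] (D : R → R) (n : ℕ) (a : Fin n → R) : R :=
  ∑ s ∈ (Finset.univ : Finset (Fin n)).powerset.filter fun s => s.Nonempty,
    (-1 : ℤ) ^ (n - s.card) • (D (∏ i ∈ s, a i) * ∏ i ∈ sᶜ, a i)

/-- The set of partitions of `{0,…,n-1}` into nonempty, pairwise disjoint blocks. -/
def partitionsOf (n : ℕ) : Finset (Finset (Finset (Fin n))) :=
  ((Finset.univ : Finset (Fin n)).powerset.powerset).filter fun P =>
    (∀ s ∈ P, s.Nonempty) ∧ (∀ s ∈ P, ∀ t ∈ P, s ≠ t → s ∩ t = ∅) ∧ P.sup id = Finset.univ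

/-- The `n`-th cumulant of a map `f` between commutative rings. -/
noncomputable def cumul {R S : Type*} [CommRing R] [CommRing S]
    (f : R → S) (n : ℕ) (a : Fin n → R) : S :=
  ∑ P ∈ partitionsOf n,
    ((-1 : ℤ) ^ (P.card - 1) * ((P.card - 1).factorial : ℤ)) • ∏ s ∈ P, f (∏ i ∈ s, a i)

/-- Restriction of a family `a` to a finite subset `s` of its index set. -/
noncomputable def restr {α β : Type*} (a : α → β) (s : Finset α) : Fin s.card → β :=
  fun i => a (s.equivFin.symm i).1

/-!
Index the cumulants of `τ` by finite sets: `κ V = ∑_{P ⊢ V} (-1)^(|P|-1) (|P|-1)! ∏_{J ∈ P} τ (x_J)`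
with `x_J = ∏_{i ∈ J} x_i`. They satisfy the moment–cumulant formula
`∑_{P ⊢ V} ∏_{J ∈ P} κ J = τ (x_V)`, proved by splitting off the block that contains a fixed point.

On `ker h` the homotopy relation reads `w = τ (σ w) - h (dA w)`, so the semifull conditions make
`ker h` closed under products and `σ` multiplicative on it. Hence every `κ J` lies in `ker h`, and
`σ (κ V)` is the cumulant of the multiplicative moments `J ↦ x_J`, which vanishes for `|V| ≥ 2`;
the homotopy relation then gives `h (dA (κ V)) = -κ V`. Finally, summing
`h (K(dA)_k (κ I_1, …, κ I_k))` over all partitions of `V` and regrouping by the union `W` of the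
blocks fed into `dA` produces terms `h (dA (τ x_W) * w) = h (τ (dB x_W) * w) = 0` with
`w ∈ ker h`. So the whole sum vanishes, and its one-block term `-κ V` is minus the sum over the
partitions with at least two blocks.
-/

theorem powerset_map {α β : Type*} [DecidableEq β] (f : α ↪ β) (s : Finset α) :
    (s.map f).powerset = s.powerset.map (mapEmbedding f).toEmbedding := by
  rw [map_eq_image, powerset_image, map_eq_image]
  exact image_congr fun t _ => (map_eq_image f t).symm

theorem map_univ_equivFin_symm {γ : Type*} (s : Finset γ) :
    univ.map (s.equivFin.symm.toEmbedding.trans (Function.Embedding.subtype (· ∈ s))) = s := by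
  rw [← map_map, map_univ_equiv, univ_eq_attach, attach_map_val]

section SetPartitions

variable {α β M : Type*} [DecidableEq α] [DecidableEq β]

def setPartitions (V : Finset α) : Finset (Finset (Finset α)) :=
  V.powerset.powerset.filter fun P =>
    (∀ s ∈ P, s.Nonempty) ∧ (∀ s ∈ P, ∀ t ∈ P, s ≠ t → s ∩ t = ∅) ∧ P.sup id = V

theorem partitionsOf_eq_setPartitions (n : ℕ) : partitionsOf n = setPartitions univ := by
  ext P
  simp only [partitionsOf, setPartitions, mem_filter]

variable {V W : Finset α} {P S R : Finset (Finset α)}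

theorem mem_setPartitions : P ∈ setPartitions V ↔
    (∀ s ∈ P, s.Nonempty) ∧ (∀ s ∈ P, ∀ t ∈ P, s ≠ t → s ∩ t = ∅) ∧ P.sup id = V := by
  simp only [setPartitions, mem_filter, mem_powerset, and_iff_right_iff_imp]
  rintro ⟨-, -, rfl⟩ s hs
  exact mem_powerset.2 (le_sup (f := id) hs)

theorem subset_of_mem_setPartitions (hP : P ∈ setPartitions V) {s : Finset α} (hs : s ∈ P) :
    s ⊆ V :=
  (mem_setPartitions.1 hP).2.2 ▸ le_sup (f := id) hs

theorem exists_mem_of_mem_setPartitions (hP : P ∈ setPartitions V) {e : α} (he : e ∈ V) :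
    ∃ s ∈ P, e ∈ s := by
  rw [← (mem_setPartitions.1 hP).2.2] at he
  simpa using he

theorem eq_of_mem_setPartitions (hP : P ∈ setPartitions V) {s t : Finset α} (hs : s ∈ P)
    (ht : t ∈ P) {e : α} (hes : e ∈ s) (het : e ∈ t) : s = t := by
  by_contra hst
  have := (mem_setPartitions.1 hP).2.1 s hs t ht hst
  exact notMem_empty e (this ▸ mem_inter.2 ⟨hes, het⟩)

theorem card_filter_mem_of_mem_setPartitions (hP : P ∈ setPartitions V) {e : α} (he : e ∈ V) :
    (P.filter (e ∈ ·)).card = 1 := by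
  obtain ⟨s, hs, hes⟩ := exists_mem_of_mem_setPartitions hP he
  refine card_eq_one.2 ⟨s, eq_singleton_iff_unique_mem.2 ⟨mem_filter.2 ⟨hs, hes⟩, ?_⟩⟩
  intro t ht
  exact eq_of_mem_setPartitions hP (mem_filter.1 ht).1 hs (mem_filter.1 ht).2 hes

theorem setPartitions_empty : setPartitions (∅ : Finset α) = {∅} := by
  ext P
  simp only [mem_setPartitions, mem_singleton]
  refine ⟨fun ⟨hne, _, hsup⟩ => eq_empty_of_forall_notMem fun s hs => ?_, by rintro rfl; simp⟩
  obtain ⟨a, ha⟩ := hne s hs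
  simpa [hsup] using (le_sup (f := id) hs) ha

theorem singleton_mem_setPartitions (hV : V.Nonempty) : {V} ∈ setPartitions V := by
  simp [mem_setPartitions, hV]

theorem eq_singleton_of_mem_setPartitions (hP : P ∈ setPartitions V) (hV : V ∈ P) : P = {V} := by
  refine eq_singleton_iff_unique_mem.2 ⟨hV, fun t ht => ?_⟩
  obtain ⟨a, ha⟩ := (mem_setPartitions.1 hP).1 t ht
  exact eq_of_mem_setPartitions hP ht hV ha (subset_of_mem_setPartitions hP ht ha)

theorem card_eq_one_iff_of_mem_setPartitions (hP : P ∈ setPartitions V) :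
    P.card = 1 ↔ P = {V} := by
  refine ⟨fun h1 => ?_, by rintro rfl; rfl⟩
  obtain ⟨s, rfl⟩ := card_eq_one.1 h1
  simpa using (mem_setPartitions.1 hP).2.2

theorem setPartitions_singleton (e : α) : setPartitions ({e} : Finset α) = {{{e}}} := by
  ext P
  refine ⟨fun hP => mem_singleton.2 (eq_singleton_of_mem_setPartitions hP ?_), fun hP =>
    mem_singleton.1 hP ▸ singleton_mem_setPartitions (singleton_nonempty e)⟩
  obtain ⟨s, hs, hes⟩ := exists_mem_of_mem_setPartitions hP (mem_singleton_self e)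
  rwa [((mem_setPartitions.1 hP).1 s hs).subset_singleton_iff.1
    (subset_of_mem_setPartitions hP hs)] at hs

theorem nonempty_of_mem_setPartitions (hP : P ∈ setPartitions V) (hV : V.Nonempty) :
    P.Nonempty := by
  obtain ⟨s, hs, -⟩ := exists_mem_of_mem_setPartitions hP hV.choose_spec
  exact ⟨s, hs⟩

theorem filter_two_le_card_setPartitions (hV : V.Nonempty) :
    (setPartitions V).filter (2 ≤ ·.card) = (setPartitions V).erase {V} := by
  ext P
  simp only [mem_filter, mem_erase, and_comm (a := P ≠ {V})]
  refine and_congr_right fun hP => ?_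
  have := (nonempty_of_mem_setPartitions hP hV).card_pos
  rw [Ne, ← card_eq_one_iff_of_mem_setPartitions hP]
  omega

theorem mem_setPartitions_sup_of_subset (hP : P ∈ setPartitions V) (hSP : S ⊆ P) :
    S ∈ setPartitions (S.sup id) := by
  obtain ⟨hne, hdisj, -⟩ := mem_setPartitions.1 hP
  exact mem_setPartitions.2 ⟨fun s hs => hne s (hSP hs),
    fun s hs t ht => hdisj s (hSP hs) t (hSP ht), rfl⟩

theorem sdiff_mem_setPartitions (hP : P ∈ setPartitions V) (hSP : S ⊆ P) :
    P \ S ∈ setPartitions (V \ S.sup id) := by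
  obtain ⟨hne, hdisj, -⟩ := mem_setPartitions.1 hP
  refine mem_setPartitions.2 ⟨fun s hs => hne s (mem_sdiff.1 hs).1,
    fun s hs t ht => hdisj s (mem_sdiff.1 hs).1 t (mem_sdiff.1 ht).1, ?_⟩
  ext a
  simp only [mem_sup, id_eq, mem_sdiff, not_exists, not_and]
  constructor
  · rintro ⟨t, ⟨htP, htS⟩, hat⟩
    refine ⟨subset_of_mem_setPartitions hP htP hat, fun s hsS has => htS ?_⟩
    rwa [eq_of_mem_setPartitions hP htP (hSP hsS) hat has]
  · rintro ⟨haV, haS⟩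
    obtain ⟨t, htP, hat⟩ := exists_mem_of_mem_setPartitions hP haV
    exact ⟨t, ⟨htP, fun htS => haS t htS hat⟩, hat⟩

theorem inter_eq_empty_of_mem_setPartitions_sdiff (hS : S ∈ setPartitions W)
    (hR : R ∈ setPartitions (V \ W)) : ∀ s ∈ S, ∀ t ∈ R, s ∩ t = ∅ := by
  intro s hs t ht
  refine eq_empty_of_forall_notMem fun a ha => ?_
  obtain ⟨has, hat⟩ := mem_inter.1 ha
  exact (mem_sdiff.1 (subset_of_mem_setPartitions hR ht hat)).2
    (subset_of_mem_setPartitions hS hs has)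

theorem union_mem_setPartitions (hW : W ⊆ V) (hS : S ∈ setPartitions W)
    (hR : R ∈ setPartitions (V \ W)) : S ∪ R ∈ setPartitions V := by
  obtain ⟨hSne, hSdisj, hSsup⟩ := mem_setPartitions.1 hS
  obtain ⟨hRne, hRdisj, hRsup⟩ := mem_setPartitions.1 hR
  have hSR := inter_eq_empty_of_mem_setPartitions_sdiff hS hR
  refine mem_setPartitions.2 ⟨fun s hs => (mem_union.1 hs).elim (hSne s) (hRne s), ?_, ?_⟩
  · intro s hs t ht hst
    rcases mem_union.1 hs with hs | hs <;> rcases mem_union.1 ht with ht | ht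
    · exact hSdisj s hs t ht hst
    · exact hSR s hs t ht
    · rw [inter_comm]; exact hSR t ht s hs
    · exact hRdisj s hs t ht hst
  · rw [sup_union, hSsup, hRsup]
    exact union_sdiff_of_subset hW

theorem disjoint_of_mem_setPartitions_sdiff (hS : S ∈ setPartitions W)
    (hR : R ∈ setPartitions (V \ W)) : Disjoint S R := by
  refine disjoint_left.2 fun s hsS hsR => ?_
  obtain ⟨a, ha⟩ := (mem_setPartitions.1 hS).1 s hsS
  have := inter_eq_empty_of_mem_setPartitions_sdiff hS hR s hsS s hsR
  rw [inter_self] at this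
  exact notMem_empty a (this ▸ ha)

theorem sum_setPartitions_sum_powerset [AddCommMonoid M] (V : Finset α)
    (F : Finset (Finset α) → Finset (Finset α) → M) :
    ∑ P ∈ setPartitions V, ∑ S ∈ P.powerset, F S (P \ S) =
      ∑ W ∈ V.powerset, ∑ S ∈ setPartitions W, ∑ R ∈ setPartitions (V \ W), F S R := by
  simp_rw [← sum_product' (setPartitions _)]
  rw [sum_sigma', sum_sigma']
  refine sum_nbij' (fun p => ⟨p.2.sup id, (p.2, p.1 \ p.2)⟩) (fun q => ⟨q.2.1 ∪ q.2.2, q.2.1⟩)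
    ?_ ?_ ?_ ?_ (fun _ _ => rfl)
  · rintro ⟨P, S⟩ hp
    simp only [mem_sigma, mem_powerset, mem_product] at hp ⊢
    exact ⟨(mem_setPartitions.1 hp.1).2.2 ▸ sup_mono hp.2,
      mem_setPartitions_sup_of_subset hp.1 hp.2, sdiff_mem_setPartitions hp.1 hp.2⟩
  · rintro ⟨W, S, R⟩ hq
    simp only [mem_sigma, mem_powerset, mem_product] at hq ⊢
    exact ⟨union_mem_setPartitions hq.1 hq.2.1 hq.2.2, subset_union_left⟩
  · rintro ⟨P, S⟩ hp
    simp only [mem_sigma, mem_powerset] at hp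
    simp [union_sdiff_of_subset hp.2]
  · rintro ⟨W, S, R⟩ hq
    simp only [mem_sigma, mem_powerset, mem_product] at hq
    simp [(mem_setPartitions.1 hq.2.1).2.2,
      union_sdiff_cancel_left (disjoint_of_mem_setPartitions_sdiff hq.2.1 hq.2.2)]

theorem sum_setPartitions_sum_mem [AddCommMonoid M] (V : Finset α)
    (F : Finset α → Finset (Finset α) → M) :
    ∑ P ∈ setPartitions V, ∑ C ∈ P, F C (P.erase C) =
      ∑ C ∈ V.powerset with C.Nonempty, ∑ Q ∈ setPartitions (V \ C), F C Q := by
  have hblocks : ∀ P : Finset (Finset α), ∑ C ∈ P, F C (P.erase C) =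
      ∑ S ∈ P.powerset, if S.card = 1 then F (S.sup id) (P \ S) else 0 := by
    intro P
    rw [← sum_filter, ← powersetCard_eq_filter, powersetCard_one, sum_map]
    simp [sdiff_singleton_eq_erase]
  have hsingle : ∀ W : Finset α, ∑ S ∈ setPartitions W, ∑ R ∈ setPartitions (V \ W),
      (if S.card = 1 then F (S.sup id) R else 0) =
        if W.Nonempty then ∑ Q ∈ setPartitions (V \ W), F W Q else 0 := by
    intro W
    by_cases hW : W.Nonempty
    · rw [if_pos hW, sum_eq_single_of_mem {W} (singleton_mem_setPartitions hW)]
      · simp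
      · intro S hS hSW
        simp [(card_eq_one_iff_of_mem_setPartitions hS).not.2 hSW]
    · simp [not_nonempty_iff_eq_empty.1 hW, setPartitions_empty]
  rw [sum_congr rfl fun P _ => hblocks P,
    sum_setPartitions_sum_powerset V fun S R => if S.card = 1 then F (S.sup id) R else 0,
    sum_filter]
  exact sum_congr rfl fun W _ => hsingle W

theorem sum_setPartitions_prod_eq_sum_mul [CommSemiring M] {e : α} (he : e ∈ V)
    (g : Finset α → M) :
    ∑ P ∈ setPartitions V, ∏ J ∈ P, g J =
      ∑ C ∈ V.powerset with e ∈ C, g C * ∑ Q ∈ setPartitions (V \ C), ∏ J ∈ Q, g J := by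
  have hblock : ∀ P ∈ setPartitions V, ∏ J ∈ P, g J =
      ∑ C ∈ P, if e ∈ C then g C * ∏ J ∈ P.erase C, g J else 0 := by
    intro P hP
    rw [← sum_filter, sum_congr rfl fun C hC => mul_prod_erase P g (mem_filter.1 hC).1, sum_const,
      card_filter_mem_of_mem_setPartitions hP he, one_smul]
  rw [sum_congr rfl hblock,
    sum_setPartitions_sum_mem V fun C Q => if e ∈ C then g C * ∏ J ∈ Q, g J else 0,
    sum_filter, sum_filter]
  refine sum_congr rfl fun C _ => ?_
  by_cases heC : e ∈ C
  · simp [heC, ne_empty_of_mem heC, mul_sum]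
  · simp [heC]

theorem map_sup_id (f : α ↪ β) (P : Finset (Finset α)) :
    (P.sup id).map f = P.sup (mapEmbedding f) := by
  induction P using cons_induction with
  | empty => simp
  | cons s P _ ih => simp [map_union, ih, mapEmbedding_apply]

theorem setPartitions_map (f : α ↪ β) (V : Finset α) :
    setPartitions (V.map f) =
      (setPartitions V).map (mapEmbedding (mapEmbedding f).toEmbedding).toEmbedding := by
  rw [setPartitions, powerset_map, powerset_map, filter_map, setPartitions]
  congr 1
  refine filter_congr fun P _ => ?_
  simp [sup_map, ← map_inter, ← map_sup_id]

theorem sum_setPartitions_prod_of_card_ne_one [CommSemiring M] (g : Finset α → M)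
    (hg : ∀ J, J.card ≠ 1 → g J = 0) (V : Finset α) :
    ∑ P ∈ setPartitions V, ∏ J ∈ P, g J = ∏ i ∈ V, g {i} := by
  induction V using Finset.induction_on with
  | empty => simp [setPartitions_empty]
  | insert e W he ih =>
    rw [sum_setPartitions_prod_eq_sum_mul (mem_insert_self e W), sum_eq_single_of_mem {e},
      insert_sdiff_of_mem _ (mem_singleton_self e), sdiff_singleton_eq_erase,
      erase_eq_of_notMem he, ih, prod_insert he]
    · simp
    · intro C hC hCe
      refine mul_eq_zero_of_left (hg C fun h1 => hCe ?_) _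
      obtain ⟨a, rfl⟩ := card_eq_one.1 h1
      rw [mem_singleton.1 (mem_filter.1 hC).2]

end SetPartitions

section Cumulants

variable {α β S : Type*} [DecidableEq α] [DecidableEq β] [CommRing S]

def cumulantCoeff (k : ℕ) : ℤ := (-1) ^ (k - 1) * (k - 1).factorial

theorem cumulantCoeff_one : cumulantCoeff 1 = 1 := by simp [cumulantCoeff]

theorem ite_sub_cumulantCoeff {k : ℕ} (hk : k ≠ 0) :
    (if k = 1 then 1 else 0) - cumulantCoeff k = (k - 1 : ℕ) * cumulantCoeff (k - 1) := by
  obtain _ | _ | k := k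
  · contradiction
  · simp [cumulantCoeff]
  · simp [cumulantCoeff, Nat.factorial_succ, pow_succ]
    ring

def setCumulant (m : Finset α → S) (V : Finset α) : S :=
  ∑ P ∈ setPartitions V, cumulantCoeff P.card • ∏ J ∈ P, m J

theorem cumul_eq_setCumulant {R : Type*} [CommRing R] (f : R → S) (n : ℕ) (a : Fin n → R) :
    cumul f n a = setCumulant (fun J => f (∏ i ∈ J, a i)) univ := by
  rw [cumul, partitionsOf_eq_setPartitions]
  rfl

theorem setCumulant_map (m : Finset β → S) (f : α ↪ β) (V : Finset α) :
    setCumulant m (V.map f) = setCumulant (fun J => m (J.map f)) V := by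
  simp [setCumulant, setPartitions_map, mapEmbedding_apply]

theorem cumul_restr {R : Type*} [CommRing R] (f : R → S) (x : α → R) (J : Finset α) :
    cumul f J.card (restr x J) = setCumulant (fun K => f (∏ i ∈ K, x i)) J := by
  have hmap := setCumulant_map (fun K => f (∏ i ∈ K, x i))
    (J.equivFin.symm.toEmbedding.trans (Function.Embedding.subtype (· ∈ J))) univ
  rw [map_univ_equivFin_symm] at hmap
  rw [hmap, cumul_eq_setCumulant]
  simp [restr, prod_map]

variable (m : Finset α → S)

theorem setCumulant_singleton (e : α) : setCumulant m {e} = m {e} := by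
  simp [setCumulant, setPartitions_singleton, cumulantCoeff_one]

theorem setCumulant_add_sum_mul {V : Finset α} {e : α} (he : e ∈ V) :
    setCumulant m V + ∑ C ∈ V.powerset with C.Nonempty ∧ e ∉ C, m C * setCumulant m (V \ C) =
      m V := by
  have hV : V.Nonempty := ⟨e, he⟩
  have hmoment : m V = ∑ P ∈ setPartitions V, (if P.card = 1 then 1 else 0 : ℤ) • ∏ J ∈ P, m J := by
    rw [sum_eq_single_of_mem {V} (singleton_mem_setPartitions hV)]
    · simp
    · intro P hP hPV
      simp [(card_eq_one_iff_of_mem_setPartitions hP).not.2 hPV]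
  -- the coefficient `k - 1` counts the blocks of `P` avoiding `e`
  have hcount : ∀ P ∈ setPartitions V,
      ((if P.card = 1 then 1 else 0) - cumulantCoeff P.card) • ∏ J ∈ P, m J =
        ∑ C ∈ P, if e ∉ C then m C * (cumulantCoeff (P.erase C).card • ∏ J ∈ P.erase C, m J)
          else 0 := by
    intro P hP
    have hcard := card_filter_add_card_filter_not (s := P) (e ∈ ·)
    rw [card_filter_mem_of_mem_setPartitions hP he] at hcard
    rw [ite_sub_cumulantCoeff (by omega), ← sum_filter, sum_congr rfl fun C hC => by
      rw [mul_smul_comm, mul_prod_erase P m (mem_filter.1 hC).1,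
        card_erase_of_mem (mem_filter.1 hC).1], sum_const, mul_smul, Nat.cast_smul_eq_nsmul]
    congr 1
    omega
  rw [add_comm, ← eq_sub_iff_add_eq, hmoment, setCumulant, ← sum_sub_distrib]
  simp_rw [← sub_smul]
  rw [sum_congr rfl hcount, sum_setPartitions_sum_mem V fun C Q =>
    if e ∉ C then m C * (cumulantCoeff Q.card • ∏ J ∈ Q, m J) else 0, ← filter_filter, sum_filter]
  refine sum_congr rfl fun C _ => ?_
  split_ifs <;> simp [setCumulant, mul_sum]

theorem sum_setPartitions_prod_setCumulant {V : Finset α} (hV : V.Nonempty) :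
    ∑ P ∈ setPartitions V, ∏ J ∈ P, setCumulant m J = m V := by
  induction V using Finset.strongInduction with
  | H V ih =>
  obtain ⟨e, he⟩ := hV
  have hVmem : V ∈ V.powerset.filter (e ∈ ·) := mem_filter.2 ⟨mem_powerset_self V, he⟩
  rw [sum_setPartitions_prod_eq_sum_mul he, ← add_sum_erase _ _ hVmem, Finset.sdiff_self,
    setPartitions_empty, sum_singleton, prod_empty, mul_one, ← setCumulant_add_sum_mul m he]
  congr 1
  refine sum_nbij' (V \ ·) (V \ ·) ?_ ?_ ?_ ?_ ?_
  · intro C hC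
    simp only [mem_erase, mem_filter, mem_powerset] at hC ⊢
    grind
  · intro D hD
    simp only [mem_erase, mem_filter, mem_powerset] at hD ⊢
    grind
  · intro C hC
    exact Finset.sdiff_sdiff_eq_self (mem_powerset.1 (mem_filter.1 (mem_erase.1 hC).2).1)
  · intro D hD
    exact Finset.sdiff_sdiff_eq_self (mem_powerset.1 (mem_filter.1 hD).1)
  · intro C hC
    simp only [mem_erase, mem_filter, mem_powerset] at hC
    obtain ⟨hCV, hCsub, heC⟩ := hC
    rw [ih _ (sdiff_ssubset hCsub ⟨e, heC⟩) (sdiff_nonempty.2 fun h => hCV (hCsub.antisymm h)),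
      Finset.sdiff_sdiff_eq_self hCsub, mul_comm]

theorem setCumulant_prod_eq_zero (y : α → S) {V : Finset α} (hV : 2 ≤ V.card) :
    setCumulant (fun J => ∏ i ∈ J, y i) V = 0 := by
  -- By induction every proper block of size `≥ 2` contributes `0`, so in the moment–cumulant
  -- formula for `V` only `{V}` and the partition into singletons survive.
  induction V using Finset.strongInduction with
  | H V ih =>
  set m : Finset α → S := fun J => ∏ i ∈ J, y i
  set g : Finset α → S := fun J => if J.card = 1 then m J else 0
  have hV0 : V.Nonempty := card_pos.1 (by omega)
  have hblocks : ∀ P ∈ (setPartitions V).erase {V}, ∏ J ∈ P, setCumulant m J = ∏ J ∈ P, g J := by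
    intro P hP
    obtain ⟨hPV, hP⟩ := mem_erase.1 hP
    refine prod_congr rfl fun J hJ => ?_
    have hJV : J ⊂ V := ssubset_of_subset_of_ne (subset_of_mem_setPartitions hP hJ)
      fun h => hPV (eq_singleton_of_mem_setPartitions hP (h ▸ hJ))
    have hJ0 := card_pos.2 ((mem_setPartitions.1 hP).1 J hJ)
    by_cases hJ1 : J.card = 1
    · obtain ⟨i, rfl⟩ := card_eq_one.1 hJ1
      simp [g, setCumulant_singleton]
    · simp only [g, if_neg hJ1]
      exact ih J hJV (by omega)
  have hg : ∑ P ∈ setPartitions V, ∏ J ∈ P, g J = m V := by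
    rw [sum_setPartitions_prod_of_card_ne_one g (fun J hJ => if_neg hJ)]
    simp [g, m]
  have hmoment := sum_setPartitions_prod_setCumulant m hV0
  rw [← add_sum_erase _ _ (singleton_mem_setPartitions hV0), sum_congr rfl hblocks,
    sum_erase _ (by simp [g, show V.card ≠ 1 by omega]), hg, prod_singleton] at hmoment
  exact add_eq_right.1 hmoment

end Cumulants

section Koszul

variable {γ R : Type*} [DecidableEq γ] [CommRing R]

def koszulOn (D : R → R) (P : Finset γ) (g : γ → R) : R :=
  ∑ S ∈ P.powerset with S.Nonempty,
    (-1 : ℤ) ^ (P.card - S.card) • (D (∏ i ∈ S, g i) * ∏ i ∈ P \ S, g i)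

theorem koszul_comp_embedding (D : R → R) {n : ℕ} (f : Fin n ↪ γ) (g : γ → R) :
    koszul D n (g ∘ f) = koszulOn D (univ.map f) g := by
  rw [koszul, koszulOn, powerset_map, filter_map, sum_map, card_map, card_univ, Fintype.card_fin]
  refine sum_congr (filter_congr fun s _ => by simp [mapEmbedding_apply]) fun s _ => ?_
  simp [mapEmbedding_apply, prod_map, ← Finset.map_sdiff, compl_eq_univ_sdiff]

theorem koszul_eq_koszulOn (D : R → R) (P : Finset γ) (g : γ → R) :
    koszul D P.card (fun j => g (P.equivFin.symm j)) = koszulOn D P g := by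
  have h := koszul_comp_embedding D
    (P.equivFin.symm.toEmbedding.trans (Function.Embedding.subtype (· ∈ P))) g
  rwa [map_univ_equivFin_symm] at h

theorem koszulOn_singleton (D : R → R) (c : γ) (g : γ → R) : koszulOn D {c} g = D (g c) := by
  rw [koszulOn, ← insert_empty_eq, powerset_insert, powerset_empty]
  simp [filter_insert, filter_singleton]

end Koszul

section Contraction

variable {α K A B : Type*} [DecidableEq α] [Semiring K] [CommRing A] [Module K A] [CommRing B]
  [Module K B] {dA : A →ₗ[K] A} {dB : B →ₗ[K] B} {σ : A →ₗ[K] B} {τ : B →ₗ[K] A} {h : A →ₗ[K] A}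

theorem eq_τ_σ_sub_h_dA (hhtp : ∀ a, h (dA a) + dA (h a) = τ (σ a) - a) {w : A} (hw : h w = 0) :
    w = τ (σ w) - h (dA w) := by
  have := hhtp w
  rw [hw, map_zero, add_zero] at this
  rw [this, sub_sub_cancel]

theorem h_mul_eq_zero (hhtp : ∀ a, h (dA a) + dA (h a) = τ (σ a) - a)
    (s1 : ∀ a b : A, h (h a * h b) = 0) (s2 : ∀ (a : A) (x : B), h (h a * τ x) = 0)
    (s3 : ∀ x y : B, h (τ x * τ y) = 0) {w w' : A} (hw : h w = 0) (hw' : h w' = 0) :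
    h (w * w') = 0 := by
  rw [eq_τ_σ_sub_h_dA hhtp hw, eq_τ_σ_sub_h_dA hhtp hw']
  simp only [sub_mul, mul_sub, map_sub, s1, s2, s3, mul_comm (τ _) (h _)]
  simp

theorem σ_mul_eq_mul (hhtp : ∀ a, h (dA a) + dA (h a) = τ (σ a) - a)
    (s5 : ∀ a b : A, σ (h a * h b) = 0) (s6 : ∀ (a : A) (x : B), σ (h a * τ x) = 0)
    (s7 : ∀ x y : B, σ (τ x * τ y) = x * y) {w w' : A} (hw : h w = 0) (hw' : h w' = 0) :
    σ (w * w') = σ w * σ w' := by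
  conv_lhs => rw [eq_τ_σ_sub_h_dA hhtp hw, eq_τ_σ_sub_h_dA hhtp hw']
  simp only [sub_mul, mul_sub, map_sub, s5, s6, s7, mul_comm (τ _) (h _)]
  simp

theorem h_prod_eq_zero (hhtp : ∀ a, h (dA a) + dA (h a) = τ (σ a) - a)
    (s1 : ∀ a b : A, h (h a * h b) = 0) (s2 : ∀ (a : A) (x : B), h (h a * τ x) = 0)
    (s3 : ∀ x y : B, h (τ x * τ y) = 0) (s4 : h 1 = 0) {ι : Type*} {s : Finset ι} {f : ι → A}
    (hf : ∀ i ∈ s, h (f i) = 0) : h (∏ i ∈ s, f i) = 0 :=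
  prod_induction f (h · = 0) (fun _ _ => h_mul_eq_zero hhtp s1 s2 s3) s4 hf

theorem σ_prod_τ (hστ : ∀ x, σ (τ x) = x) (hhtp : ∀ a, h (dA a) + dA (h a) = τ (σ a) - a)
    (hhτ : ∀ x, h (τ x) = 0)
    (s1 : ∀ a b : A, h (h a * h b) = 0) (s2 : ∀ (a : A) (x : B), h (h a * τ x) = 0)
    (s3 : ∀ x y : B, h (τ x * τ y) = 0) (s4 : h 1 = 0)
    (s5 : ∀ a b : A, σ (h a * h b) = 0) (s6 : ∀ (a : A) (x : B), σ (h a * τ x) = 0)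
    (s7 : ∀ x y : B, σ (τ x * τ y) = x * y) (s8 : σ 1 = 1) {ι : Type*} (s : Finset ι)
    (g : ι → B) : σ (∏ i ∈ s, τ (g i)) = ∏ i ∈ s, g i := by
  refine (prod_hom_rel (r := fun w y => h w = 0 ∧ σ w = y) ⟨s4, s8⟩ ?_).2
  rintro i w _ ⟨hw, rfl⟩
  exact ⟨h_mul_eq_zero hhtp s1 s2 s3 (hhτ _) hw, by rw [σ_mul_eq_mul hhtp s5 s6 s7 (hhτ _) hw, hστ]⟩

theorem h_setCumulant_eq_zero (hhtp : ∀ a, h (dA a) + dA (h a) = τ (σ a) - a)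
    (s1 : ∀ a b : A, h (h a * h b) = 0) (s2 : ∀ (a : A) (x : B), h (h a * τ x) = 0)
    (s3 : ∀ x y : B, h (τ x * τ y) = 0) (s4 : h 1 = 0) {m : Finset α → A}
    (hm : ∀ J, h (m J) = 0) (V : Finset α) : h (setCumulant m V) = 0 := by
  simp only [setCumulant, map_sum, map_zsmul, h_prod_eq_zero hhtp s1 s2 s3 s4 fun J _ => hm J,
    smul_zero, sum_const_zero]

theorem σ_setCumulant_τ (hστ : ∀ x, σ (τ x) = x) (hhtp : ∀ a, h (dA a) + dA (h a) = τ (σ a) - a)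
    (hhτ : ∀ x, h (τ x) = 0)
    (s1 : ∀ a b : A, h (h a * h b) = 0) (s2 : ∀ (a : A) (x : B), h (h a * τ x) = 0)
    (s3 : ∀ x y : B, h (τ x * τ y) = 0) (s4 : h 1 = 0)
    (s5 : ∀ a b : A, σ (h a * h b) = 0) (s6 : ∀ (a : A) (x : B), σ (h a * τ x) = 0)
    (s7 : ∀ x y : B, σ (τ x * τ y) = x * y) (s8 : σ 1 = 1) (g : Finset α → B) (V : Finset α) :
    σ (setCumulant (fun J => τ (g J)) V) = setCumulant g V := by
  simp only [setCumulant, map_sum, map_zsmul, σ_prod_τ hστ hhtp hhτ s1 s2 s3 s4 s5 s6 s7 s8]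

theorem h_dA_setCumulant (hστ : ∀ x, σ (τ x) = x) (hhtp : ∀ a, h (dA a) + dA (h a) = τ (σ a) - a)
    (hhτ : ∀ x, h (τ x) = 0)
    (s1 : ∀ a b : A, h (h a * h b) = 0) (s2 : ∀ (a : A) (x : B), h (h a * τ x) = 0)
    (s3 : ∀ x y : B, h (τ x * τ y) = 0) (s4 : h 1 = 0)
    (s5 : ∀ a b : A, σ (h a * h b) = 0) (s6 : ∀ (a : A) (x : B), σ (h a * τ x) = 0)
    (s7 : ∀ x y : B, σ (τ x * τ y) = x * y) (s8 : σ 1 = 1) (x : α → B) {V : Finset α}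
    (hV : 2 ≤ V.card) :
    h (dA (setCumulant (fun J => τ (∏ i ∈ J, x i)) V)) =
      -setCumulant (fun J => τ (∏ i ∈ J, x i)) V := by
  have hσ := σ_setCumulant_τ hστ hhtp hhτ s1 s2 s3 s4 s5 s6 s7 s8 (fun J => ∏ i ∈ J, x i) V
  rw [setCumulant_prod_eq_zero x hV] at hσ
  have := hhtp (setCumulant (fun J => τ (∏ i ∈ J, x i)) V)
  rwa [h_setCumulant_eq_zero hhtp s1 s2 s3 s4 (fun J => hhτ _), map_zero, add_zero, hσ, map_zero,
    zero_sub] at this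

theorem sum_setPartitions_h_koszulOn (hhtp : ∀ a, h (dA a) + dA (h a) = τ (σ a) - a)
    (hhτ : ∀ x, h (τ x) = 0) (hτd : ∀ x, τ (dB x) = dA (τ x))
    (s1 : ∀ a b : A, h (h a * h b) = 0) (s2 : ∀ (a : A) (x : B), h (h a * τ x) = 0)
    (s3 : ∀ x y : B, h (τ x * τ y) = 0) (s4 : h 1 = 0) (g : Finset α → B) (V : Finset α) :
    ∑ P ∈ setPartitions V, h (koszulOn dA P (setCumulant fun J => τ (g J))) = 0 := by
  set κ := setCumulant fun J => τ (g J)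
  have hκ : ∀ J, h (κ J) = 0 := h_setCumulant_eq_zero hhtp s1 s2 s3 s4 fun J => hhτ _
  let F : Finset (Finset α) → Finset (Finset α) → A := fun S R =>
    if S.Nonempty then (-1 : ℤ) ^ R.card • h (dA (∏ J ∈ S, κ J) * ∏ J ∈ R, κ J) else 0
  have hterm : ∀ P ∈ setPartitions V, h (koszulOn dA P κ) = ∑ S ∈ P.powerset, F S (P \ S) := by
    intro P _
    rw [koszulOn, map_sum, sum_filter]
    refine sum_congr rfl fun S hS => ?_
    simp only [F, map_zsmul, card_sdiff_of_subset (mem_powerset.1 hS)]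
  rw [sum_congr rfl hterm, sum_setPartitions_sum_powerset V F]
  refine sum_eq_zero fun W _ => ?_
  obtain rfl | hW := W.eq_empty_or_nonempty
  · simp [F, setPartitions_empty]
  rw [sum_comm]
  refine sum_eq_zero fun R _ => ?_
  -- the inner sum over partitions of `W` reassembles the moment `τ (g W)`, and `dA ∘ τ = τ ∘ dB`
  rw [sum_congr rfl fun S hS => if_pos (nonempty_of_mem_setPartitions hS hW), ← smul_sum,
    ← map_sum, ← sum_mul, ← map_sum, sum_setPartitions_prod_setCumulant _ hW, ← hτd,
    h_mul_eq_zero hhtp s1 s2 s3 (hhτ _) (h_prod_eq_zero hhtp s1 s2 s3 s4 fun J _ => hκ J),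
    smul_zero]

end Contraction

theorem semifull_transfer_cumulants_general (K A B : Type*) [Field K]
    [CommRing A] [Algebra K A] [CommRing B] [Algebra K B]
    (dA : A →ₗ[K] A) (dB : B →ₗ[K] B) (σ : A →ₗ[K] B) (τ : B →ₗ[K] A) (h : A →ₗ[K] A)
    (hτd : ∀ x, τ (dB x) = dA (τ x))
    (hστ : ∀ x, σ (τ x) = x)
    (hhtp : ∀ a, h (dA a) + dA (h a) = τ (σ a) - a)
    (hhτ : ∀ x, h (τ x) = 0)
    (s1 : ∀ a b : A, h (h a * h b) = 0) (s2 : ∀ (a : A) (x : B), h (h a * τ x) = 0)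
    (s3 : ∀ x y : B, h (τ x * τ y) = 0) (s4 : h 1 = 0)
    (s5 : ∀ a b : A, σ (h a * h b) = 0) (s6 : ∀ (a : A) (x : B), σ (h a * τ x) = 0)
    (s7 : ∀ x y : B, σ (τ x * τ y) = x * y) (s8 : σ 1 = 1) :
    ∀ (n : ℕ), 2 ≤ n → ∀ x : Fin n → B,
      cumul (⇑τ) n x =
        ∑ P ∈ (partitionsOf n).filter fun P => 2 ≤ P.card,
          h (koszul (⇑dA) P.card fun j =>
            cumul (⇑τ) ((P.equivFin.symm j).1.card) (restr x (P.equivFin.symm j).1)) := by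
  intro n hn x
  have huniv : (univ : Finset (Fin n)).Nonempty := univ_nonempty_iff.2 ⟨⟨0, by omega⟩⟩
  have hvanish := sum_setPartitions_h_koszulOn hhtp hhτ hτd s1 s2 s3 s4 (fun J => ∏ i ∈ J, x i) univ
  have hsingle := h_dA_setCumulant hστ hhtp hhτ s1 s2 s3 s4 s5 s6 s7 s8 x (V := univ)
    (by simpa using hn)
  simp_rw [cumul_restr, koszul_eq_koszulOn]
  rw [cumul_eq_setCumulant, partitionsOf_eq_setPartitions, filter_two_le_card_setPartitions huniv,
    sum_erase_eq_sub (singleton_mem_setPartitions huniv), hvanish, koszulOn_singleton, hsingle,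
    zero_sub, neg_neg]

/-- for a semifull algebra contraction `(σ,τ,h)` of `(A,d_A)` onto `(B,d_B)`,
the cumulants of `τ` satisfy, for `n ≥ 2`:
`κ(τ)_n(x_1,…,x_n) = Σ_{partitions into k ≥ 2 blocks} h(K(d_A)_k(κ(τ)_{|I_1|}(…),…,κ(τ)_{|I_k|}(…)))`. -/
theorem semifull_transfer_cumulants (K A B : Type*) [Field K] [CharZero K]
    [CommRing A] [Algebra K A] [CommRing B] [Algebra K B]
    (dA : A →ₗ[K] A) (dB : B →ₗ[K] B) (σ : A →ₗ[K] B) (τ : B →ₗ[K] A) (h : A →ₗ[K] A)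
    (hdA2 : ∀ a, dA (dA a) = 0) (hdB2 : ∀ x, dB (dB x) = 0)
    (hσd : ∀ a, σ (dA a) = dB (σ a)) (hτd : ∀ x, τ (dB x) = dA (τ x))
    (hστ : ∀ x, σ (τ x) = x)
    (hhtp : ∀ a, h (dA a) + dA (h a) = τ (σ a) - a)
    (hσh : ∀ a, σ (h a) = 0) (hhτ : ∀ x, h (τ x) = 0) (hhh : ∀ a, h (h a) = 0)
    (hdA1 : dA 1 = 0) (hdB1 : dB 1 = 0)
    (s1 : ∀ a b : A, h (h a * h b) = 0) (s2 : ∀ (a : A) (x : B), h (h a * τ x) = 0)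
    (s3 : ∀ x y : B, h (τ x * τ y) = 0) (s4 : h 1 = 0)
    (s5 : ∀ a b : A, σ (h a * h b) = 0) (s6 : ∀ (a : A) (x : B), σ (h a * τ x) = 0)
    (s7 : ∀ x y : B, σ (τ x * τ y) = x * y) (s8 : σ 1 = 1) :
    ∀ (n : ℕ), 2 ≤ n → ∀ x : Fin n → B,
      cumul (⇑τ) n x =
        ∑ P ∈ (partitionsOf n).filter fun P => 2 ≤ P.card,
          h (koszul (⇑dA) P.card fun j =>
            cumul (⇑τ) ((P.equivFin.symm j).1.card) (restr x (P.equivFin.symm j).1)) :=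
  semifull_transfer_cumulants_general K A B dA dB σ τ h hτd hστ hhtp hhτ s1 s2 s3 s4 s5 s6 s7 s8
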